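/- Let α ∈ (0, π/2), Δ = Δ(α) and let {T_t}_{t∈Δ} be a C₀-semigroup on a Banach space X such that DAsym(T, 0) = {y ∈ X : for every ε > 0 the density of {t ∈ Δ : ‖T_t y‖ < ε} exists and equals 1} is dense in X. Then for every measurable set A ⊆ Δ with udens(A) = 1, the set P(A) = {x ∈ X : there exists a measurable A' ⊆ A with udens(A') = 1 such that ‖T_t x‖ → 0 as |t| → ∞ along t ∈ A'} is a dense Gδ subset of X. -/

import Mathlib

open MeasureTheory Filter Set

noncomputable section

/-- The complex sector `Δ(α) = {r e^{iθ} : r ≥ 0, |θ| ≤ α}`. -/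
def sector (α : ℝ) : Set ℂ := {z : ℂ | |Complex.arg z| ≤ α}

/-- `Δ_r = {t ∈ Δ(α) : |t| < r}`. -/
def sectorBall (α r : ℝ) : Set ℂ := {z ∈ sector α | ‖z‖ < r}

/-- Upper density of a set `A` with respect to the sector `Δ(α)`. -/
def udens (α : ℝ) (A : Set ℂ) : ℝ :=
  limsup (fun r : ℝ =>
    (volume (A ∩ sectorBall α r)).toReal / (volume (sectorBall α r)).toReal) atTop

/-- Lower density of a set `A` with respect to the sector `Δ(α)`. -/
def ldens (α : ℝ) (A : Set ℂ) : ℝ :=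
  liminf (fun r : ℝ =>
    (volume (A ∩ sectorBall α r)).toReal / (volume (sectorBall α r)).toReal) atTop

/-- The filter expressing `|t| → ∞` along `t ∈ A`. -/
def alongAbs (A : Set ℂ) : Filter ℂ :=
  (atTop.comap (fun z : ℂ => ‖z‖)) ⊓ 𝓟 A

/-- A `C₀`-semigroup of continuous linear operators indexed by the sector `Δ(α)`. -/
structure CZeroSemigroup (α : ℝ) (𝕜 X : Type*) [NontriviallyNormedField 𝕜]
    [NormedAddCommGroup X] [NormedSpace 𝕜 X] where
  T : ℂ → X →L[𝕜] X
  map_zero' : T 0 = ContinuousLinearMap.id 𝕜 X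
  map_add' : ∀ s ∈ sector α, ∀ t ∈ sector α, T (s + t) = (T s).comp (T t)
  cont' : ∀ x : X, ContinuousOn (fun t => T t x) (sector α)

variable {α : ℝ} {𝕜 X : Type*} [NontriviallyNormedField 𝕜]
  [NormedAddCommGroup X] [NormedSpace 𝕜 X]

/-- Distributional sensitivity. -/
def DistSensitive (S : CZeroSemigroup α 𝕜 X) : Prop :=
  ∃ δ > (0:ℝ), ∀ x : X, ∀ ε > (0:ℝ), ∃ y : X, ‖x - y‖ < ε ∧
    udens α {t ∈ sector α | δ < ‖S.T t x - S.T t y‖} = 1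

/-- Distributionally unbounded vector. -/
def DistUnbounded (S : CZeroSemigroup α 𝕜 X) (x : X) : Prop :=
  ∃ A : Set ℂ, A ⊆ sector α ∧ MeasurableSet A ∧ udens α A = 1 ∧
    Tendsto (fun t => ‖S.T t x‖) (alongAbs A) atTop

/-- Distributionally semi-irregular vector. -/
def DistSemiIrregular (S : CZeroSemigroup α 𝕜 X) (x : X) : Prop :=
  ∃ A B : Set ℂ, A ⊆ sector α ∧ B ⊆ sector α ∧ MeasurableSet A ∧ MeasurableSet B ∧
    udens α A = 1 ∧ udens α B = 1 ∧
    Tendsto (fun t => ‖S.T t x‖) (alongAbs A) (nhds 0) ∧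
    ∃ δ > (0:ℝ), ∀ t ∈ B, δ ≤ ‖S.T t x‖

/-- Distributionally irregular vector. -/
def DistIrregular (S : CZeroSemigroup α 𝕜 X) (x : X) : Prop :=
  ∃ A B : Set ℂ, A ⊆ sector α ∧ B ⊆ sector α ∧ MeasurableSet A ∧ MeasurableSet B ∧
    udens α A = 1 ∧ udens α B = 1 ∧
    Tendsto (fun t => ‖S.T t x‖) (alongAbs A) (nhds 0) ∧
    Tendsto (fun t => ‖S.T t x‖) (alongAbs B) atTop

/-- Distributionally chaotic pair. -/
def DistChaoticPair (S : CZeroSemigroup α 𝕜 X) (x y : X) : Prop :=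
  ∃ δ > (0:ℝ), ∀ ε > (0:ℝ),
    udens α {t ∈ sector α | ‖S.T t x - S.T t y‖ < ε} = 1 ∧
    udens α {t ∈ sector α | δ < ‖S.T t x - S.T t y‖} = 1

/-- Distributionally scrambled set. -/
def DistScrambled (S : CZeroSemigroup α 𝕜 X) (K : Set X) : Prop :=
  ∀ x ∈ K, ∀ y ∈ K, x ≠ y → DistChaoticPair S x y

/-!
A vector `x` lies in `P(A)` iff `udens (A ∩ {t : ‖T_t x‖ < 1/(n+1)}) = 1` for every `n`. One
direction holds because discarding a bounded set does not change densities; for the other, a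
diagonal argument glues together the pieces of these sets lying in annuli whose radii grow so fast
that the inner sector has negligible volume compared with the outer one.

Each of these sets is `Gδ`: by Banach–Steinhaus the operators `T_t` with `t` in a bounded part of
the sector are equicontinuous, so `x ↦ μ (A ∩ Δ_r ∩ {t : ‖T_t x‖ < ε})` is lower semicontinuous.
They are dense because intersecting a set of upper density one with a measurable set of lower
density one leaves a set of upper density one, so `DAsym(T, 0) ⊆ P(A)`.
-/
open MeasureTheory Filter Set Topology
open scoped Pointwise

lemma sector_eq_setOf_norm_mul_cos_le_re (h0 : 0 ≤ α) (hπ : α ≤ Real.pi) :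
    sector α = {z : ℂ | ‖z‖ * Real.cos α ≤ z.re} := by
  ext z
  rcases eq_or_ne z 0 with rfl | hz
  · simp [sector, h0]
  rw [mem_ofPred_eq, ← le_div_iff₀' (norm_pos_iff.2 hz), ← Complex.cos_arg hz, ← Real.cos_abs z.arg,
    Real.strictAntiOn_cos.le_iff_ge ⟨h0, hπ⟩ ⟨abs_nonneg _, Complex.abs_arg_le_pi z⟩]
  rfl

lemma isClosed_sector (α : ℝ) : IsClosed (sector α) := by
  rcases lt_or_ge α 0 with hneg | h0
  · convert isClosed_empty
    exact eq_empty_of_forall_notMem fun z hz => (hneg.trans_le (abs_nonneg _)).not_ge hz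
  rcases le_or_gt α Real.pi with hπ | hπ
  · rw [sector_eq_setOf_norm_mul_cos_le_re h0 hπ]
    exact isClosed_le (continuous_norm.mul continuous_const) Complex.continuous_re
  · convert isClosed_univ
    exact eq_univ_of_forall fun z => (Complex.abs_arg_le_pi z).trans hπ.le

lemma sectorBall_subset_ball (α r : ℝ) : sectorBall α r ⊆ Metric.ball 0 r := fun z hz => by
  simpa using hz.2

lemma volume_sectorBall_ne_top (α r : ℝ) : volume (sectorBall α r) ≠ ⊤ :=
  measure_ne_top_of_subset (sectorBall_subset_ball α r) measure_ball_lt_top.ne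

lemma volume_sectorBall_pos (hα : 0 < α) {r : ℝ} (hr : 0 < r) : 0 < volume (sectorBall α r) := by
  have hU : IsOpen (Complex.slitPlane ∩ (fun z => |Complex.arg z|) ⁻¹' Iio α ∩ Metric.ball 0 r) :=
    (Complex.continuousOn_arg.abs.isOpen_inter_preimage Complex.isOpen_slitPlane isOpen_Iio).inter
      Metric.isOpen_ball
  refine (hU.measure_pos volume ⟨((r / 2 : ℝ) : ℂ), ?_, ?_⟩).trans_le (measure_mono ?_)
  · refine ⟨Complex.ofReal_mem_slitPlane.2 (half_pos hr), ?_⟩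
    rwa [mem_preimage, Complex.arg_ofReal_of_nonneg (half_pos hr).le, abs_zero]
  · simpa [abs_of_pos hr] using half_lt_self hr
  · rintro z ⟨⟨-, hz⟩, hzr⟩
    exact ⟨show |z.arg| ≤ α from (mem_Iio.1 hz).le, by simpa using hzr⟩

lemma sectorBall_eq_smul (α : ℝ) {r : ℝ} (hr : 0 < r) : sectorBall α r = r • sectorBall α 1 := by
  ext z
  have harg : Complex.arg (r⁻¹ • z) = Complex.arg z := by
    rw [Complex.real_smul, Complex.arg_real_mul z (inv_pos.2 hr)]
  have hnorm : ‖r⁻¹ • z‖ < 1 ↔ ‖z‖ < r := by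
    rw [norm_smul, Real.norm_of_nonneg (inv_nonneg.2 hr.le), inv_mul_lt_iff₀ hr, mul_one]
  rw [mem_smul_set_iff_inv_smul_mem₀ hr.ne']
  simp only [sectorBall, sector, mem_ofPred_eq, harg, hnorm]

lemma volume_real_sectorBall (α : ℝ) {r : ℝ} (hr : 0 < r) :
    volume.real (sectorBall α r) = r ^ 2 * volume.real (sectorBall α 1) := by
  rw [measureReal_def, sectorBall_eq_smul α hr, Measure.addHaar_smul_of_nonneg volume hr.le,
    Complex.finrank_real_complex, ENNReal.toReal_mul, ENNReal.toReal_ofReal (by positivity),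
    measureReal_def]

lemma tendsto_volume_real_sectorBall (hα : 0 < α) :
    Tendsto (fun r => volume.real (sectorBall α r)) atTop atTop := by
  have hpos : 0 < volume.real (sectorBall α 1) :=
    ENNReal.toReal_pos (volume_sectorBall_pos hα one_pos).ne' (volume_sectorBall_ne_top α 1)
  refine ((tendsto_pow_atTop two_ne_zero).atTop_mul_const hpos).congr' ?_
  filter_upwards [eventually_gt_atTop 0] with r hr
  rw [volume_real_sectorBall α hr]

lemma tendsto_volume_real_sectorBall_div (hα : 0 < α) (R : ℝ) :
    Tendsto (fun r => volume.real (sectorBall α R) / volume.real (sectorBall α r)) atTop (𝓝 0) :=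
  tendsto_const_nhds.div_atTop (tendsto_volume_real_sectorBall hα)

def densRatio (α : ℝ) (A : Set ℂ) (r : ℝ) : ℝ :=
  volume.real (A ∩ sectorBall α r) / volume.real (sectorBall α r)

section DensRatio

variable {A A' C : Set ℂ} {r : ℝ}

lemma udens_eq_limsup_densRatio : udens α A = limsup (densRatio α A) atTop := rfl

lemma ldens_eq_liminf_densRatio : ldens α A = liminf (densRatio α A) atTop := rfl

lemma densRatio_nonneg : 0 ≤ densRatio α A r :=
  div_nonneg measureReal_nonneg measureReal_nonneg

lemma densRatio_le_one : densRatio α A r ≤ 1 :=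
  div_le_one_of_le₀ (measureReal_mono inter_subset_right (volume_sectorBall_ne_top α r))
    measureReal_nonneg

lemma densRatio_univ (h : volume.real (sectorBall α r) ≠ 0) : densRatio α univ r = 1 := by
  rw [densRatio, univ_inter, div_self h]

lemma densRatio_le_of_inter_subset (h : A ∩ sectorBall α r ⊆ A') :
    densRatio α A r ≤ densRatio α A' r :=
  div_le_div_of_nonneg_right (measureReal_mono (subset_inter h inter_subset_right)
    (measure_ne_top_of_subset inter_subset_right (volume_sectorBall_ne_top α r)))
    measureReal_nonneg

lemma densRatio_mono (h : A ⊆ A') : densRatio α A r ≤ densRatio α A' r :=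
  densRatio_le_of_inter_subset (inter_subset_left.trans h)

lemma densRatio_union_le : densRatio α (A ∪ A') r ≤ densRatio α A r + densRatio α A' r := by
  rw [densRatio, union_inter_distrib_right, densRatio, densRatio, ← add_div]
  exact div_le_div_of_nonneg_right (measureReal_union_le _ _) measureReal_nonneg

lemma densRatio_add_densRatio_compl_le (hC : MeasurableSet C) :
    densRatio α C r + densRatio α Cᶜ r ≤ 1 := by
  rw [densRatio, densRatio, ← add_div, inter_comm, ← sdiff_eq_compl_inter,
    measureReal_inter_add_sdiff hC (volume_sectorBall_ne_top α r)]
  exact div_self_le_one _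

lemma densRatio_setOf_norm_lt_le (R : ℝ) :
    densRatio α {z | ‖z‖ < R} r ≤ volume.real (sectorBall α R) / volume.real (sectorBall α r) :=
  div_le_div_of_nonneg_right
    (measureReal_mono (fun _ hz => ⟨hz.2.1, hz.1⟩) (volume_sectorBall_ne_top α R))
    measureReal_nonneg

lemma densRatio_le_add_of_inter_subset {R : ℝ} (h : A ∩ sectorBall α r ⊆ A' ∪ {z | ‖z‖ < R}) :
    densRatio α A r ≤
      densRatio α A' r + volume.real (sectorBall α R) / volume.real (sectorBall α r) :=
  (densRatio_le_of_inter_subset h).trans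
    (densRatio_union_le.trans (add_le_add_right (densRatio_setOf_norm_lt_le R) _))

lemma isBoundedUnder_le_densRatio : IsBoundedUnder (· ≤ ·) atTop (densRatio α A) :=
  isBoundedUnder_of ⟨1, fun _ => densRatio_le_one⟩

lemma isBoundedUnder_ge_densRatio : IsBoundedUnder (· ≥ ·) atTop (densRatio α A) :=
  isBoundedUnder_of ⟨0, fun _ => densRatio_nonneg⟩

lemma udens_le_one : udens α A ≤ 1 :=
  limsup_le_of_le isBoundedUnder_ge_densRatio.isCoboundedUnder_le
    (Eventually.of_forall fun _ => densRatio_le_one)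

lemma udens_eq_one_iff : udens α A = 1 ↔ ∀ c < 1, ∃ᶠ r in atTop, c < densRatio α A r := by
  rw [le_antisymm_iff, and_iff_right udens_le_one, udens_eq_limsup_densRatio,
    le_limsup_iff isBoundedUnder_ge_densRatio.isCoboundedUnder_le isBoundedUnder_le_densRatio]

lemma udens_eq_one_iff_forall_nat :
    udens α A = 1 ↔ ∀ n N : ℕ, ∃ r ≥ (N : ℝ), 1 - 1 / (n + 1) < densRatio α A r := by
  rw [udens_eq_one_iff]
  refine ⟨fun h n N => ?_, fun h c hc => frequently_atTop.2 fun a => ?_⟩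
  · exact frequently_atTop.1 (h _ (sub_lt_self 1 Nat.one_div_pos_of_nat)) N
  · obtain ⟨n, hn⟩ := exists_nat_one_div_lt (sub_pos.2 hc)
    obtain ⟨N, hN⟩ := exists_nat_ge a
    obtain ⟨r, hr, hlt⟩ := h n N
    exact ⟨r, hN.trans hr, by linarith⟩

lemma udens_eq_one_of_subset (h : A ⊆ A') (hA : udens α A = 1) : udens α A' = 1 :=
  udens_eq_one_iff.2 fun c hc =>
    (udens_eq_one_iff.1 hA c hc).mono fun _ hr => hr.trans_le (densRatio_mono h)

lemma eventually_lt_densRatio_of_ldens_eq_one (h : ldens α C = 1) {c : ℝ} (hc : c < 1) :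
    ∀ᶠ r in atTop, c < densRatio α C r :=
  eventually_lt_of_lt_liminf (by rwa [← ldens_eq_liminf_densRatio, h]) isBoundedUnder_ge_densRatio

lemma udens_inter_eq_one (hA : udens α A = 1) (hC : MeasurableSet C) (hC1 : ldens α C = 1) :
    udens α (A ∩ C) = 1 := by
  refine udens_eq_one_iff.2 fun c hc => ?_
  have hc' : (1 + c) / 2 < 1 := by linarith
  refine ((udens_eq_one_iff.1 hA _ hc').and_eventually
    (eventually_lt_densRatio_of_ldens_eq_one hC1 hc')).mono fun r ⟨hAr, hCr⟩ => ?_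
  have hsplit : densRatio α A r ≤ densRatio α (A ∩ C) r + densRatio α Cᶜ r :=
    (densRatio_mono fun z hz => (em (z ∈ C)).imp (fun h => ⟨hz, h⟩) id).trans densRatio_union_le
  linarith [densRatio_add_densRatio_compl_le (α := α) (r := r) hC]

lemma ldens_setOf_le_norm (hα : 0 < α) (R : ℝ) : ldens α {z | R ≤ ‖z‖} = 1 := by
  rw [ldens_eq_liminf_densRatio]
  refine Tendsto.liminf_eq (tendsto_of_tendsto_of_tendsto_of_le_of_le'
    (by simpa using (tendsto_volume_real_sectorBall_div hα R).const_sub 1) tendsto_const_nhds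
    ?_ (Eventually.of_forall fun _ => densRatio_le_one))
  filter_upwards [(tendsto_volume_real_sectorBall hα).eventually_gt_atTop 0] with r hr
  have h := densRatio_le_add_of_inter_subset (α := α) (A := univ) (A' := {z | R ≤ ‖z‖}) (r := r)
    (R := R) fun z _ => (le_or_gt R ‖z‖).imp id id
  rw [densRatio_univ hr.ne'] at h
  linarith

end DensRatio

lemma eventually_alongAbs_iff {A : Set ℂ} {p : ℂ → Prop} :
    (∀ᶠ t in alongAbs A, p t) ↔ ∃ R, ∀ t ∈ A, R ≤ ‖t‖ → p t := by
  rw [alongAbs, eventually_inf_principal, eventually_comap, eventually_atTop]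
  exact ⟨fun ⟨R, h⟩ => ⟨R, fun t ht hR => h _ hR t rfl ht⟩,
    fun ⟨R, h⟩ => ⟨R, fun _ hb t ht htA => h t htA (ht ▸ hb)⟩⟩

lemma exists_udens_eq_one_eventually_mem (hα : 0 < α) {E : ℕ → Set ℂ} (hE : Antitone E)
    (hEm : ∀ n, MeasurableSet (E n)) (hE1 : ∀ n, udens α (E n) = 1) :
    ∃ A' ⊆ E 0, MeasurableSet A' ∧ udens α A' = 1 ∧ ∀ n, ∀ᶠ t in alongAbs A', t ∈ E n := by
  have step : ∀ (n : ℕ) (R : ℝ), ∃ s, R + 1 ≤ s ∧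
      volume.real (sectorBall α R) / volume.real (sectorBall α s) < 1 / (n + 1) ∧
      1 - 1 / (n + 1) < densRatio α (E n) s := by
    intro n R
    have hn : (0 : ℝ) < 1 / (n + 1) := Nat.one_div_pos_of_nat
    obtain ⟨s, hdens, hR, hvol⟩ := ((udens_eq_one_iff.1 (hE1 n) _ (sub_lt_self 1 hn)).and_eventually
      ((eventually_ge_atTop (R + 1)).and
        ((tendsto_volume_real_sectorBall_div hα R).eventually (gt_mem_nhds hn)))).exists
    exact ⟨s, hR, hvol, hdens⟩
  choose next hnext_ge hnext_vol hnext_dens using step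
  let r : ℕ → ℝ := fun n => Nat.rec (motive := fun _ => ℝ) 0 next n
  have hr_succ (n : ℕ) : r (n + 1) = next n (r n) := rfl
  have hr_mono : StrictMono r :=
    strictMono_nat_of_lt_succ fun n => by linarith [hr_succ n, hnext_ge n (r n)]
  have hr_ge (n : ℕ) : (n : ℝ) ≤ r n := by
    induction n with
    | zero => simp [r]
    | succ n ih => push_cast; linarith [hr_succ n, hnext_ge n (r n)]
  set A' := ⋃ n, E n ∩ (‖·‖) ⁻¹' Ico (r n) (r (n + 1))
  refine ⟨A', iUnion_subset fun n => inter_subset_left.trans (hE (Nat.zero_le n)),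
    .iUnion fun n => (hEm n).inter (measurable_norm measurableSet_Ico), ?_, fun n => ?_⟩
  · refine udens_eq_one_iff.2 fun c hc => ?_
    have hsmall : ∀ᶠ n : ℕ in atTop, 1 / ((n : ℝ) + 1) < (1 - c) / 2 :=
      tendsto_one_div_add_atTop_nhds_zero_nat.eventually (gt_mem_nhds (by linarith))
    have hfreq : ∀ᶠ n : ℕ in atTop, c < densRatio α A' (r (n + 1)) := by
      filter_upwards [hsmall] with n hn
      have hcover : E n ∩ sectorBall α (r (n + 1)) ⊆ A' ∪ {z | ‖z‖ < r n} :=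
        fun z ⟨hzE, _, hz⟩ => (lt_or_ge ‖z‖ (r n)).elim Or.inr
          fun h => Or.inl (mem_iUnion.2 ⟨n, hzE, h, hz⟩)
      have hle := densRatio_le_add_of_inter_subset hcover
      rw [hr_succ] at hle ⊢
      linarith [hnext_vol n (r n), hnext_dens n (r n)]
    exact (tendsto_atTop_mono (fun n => (hr_ge (n + 1)).trans' (by simp))
      tendsto_natCast_atTop_atTop).frequently hfreq.frequently
  · refine eventually_alongAbs_iff.2 ⟨r (n + 1), fun t ht hR => ?_⟩
    obtain ⟨m, htm, -, hm⟩ := mem_iUnion.1 ht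
    have hnm : n + 1 < m + 1 := hr_mono.lt_iff_lt.1 (hR.trans_lt hm)
    exact hE (by omega) htm

lemma exists_udens_eq_one_tendsto_zero_iff (hα : 0 < α) {A : Set ℂ} {f : ℂ → ℝ} (hf : 0 ≤ f)
    (hm : ∀ ε, MeasurableSet (A ∩ {t | f t < ε})) :
    (∃ A' ⊆ A, MeasurableSet A' ∧ udens α A' = 1 ∧ Tendsto f (alongAbs A') (𝓝 0)) ↔
      ∀ n : ℕ, udens α (A ∩ {t | f t < 1 / (n + 1)}) = 1 := by
  constructor
  · rintro ⟨A', hA'A, -, hA'1, hf0⟩ n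
    obtain ⟨R, hR⟩ :=
      eventually_alongAbs_iff.1 (hf0.eventually (gt_mem_nhds Nat.one_div_pos_of_nat))
    exact udens_eq_one_of_subset (A := A' ∩ {t | R ≤ ‖t‖})
      (fun t ⟨htA', ht⟩ => ⟨hA'A htA', hR t htA' ht⟩)
      (udens_inter_eq_one hA'1 (measurableSet_le measurable_const measurable_norm)
        (ldens_setOf_le_norm hα R))
  · intro h
    have hE : Antitone fun n : ℕ => A ∩ {t | f t < 1 / (n + 1)} := fun m n hmn =>
      inter_subset_inter_right A fun t ht =>
        show f t < _ from lt_of_lt_of_le ht (Nat.one_div_le_one_div hmn)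
    obtain ⟨A', hA'A, hA'm, hA'1, hev⟩ := exists_udens_eq_one_eventually_mem hα hE (fun n => hm _) h
    refine ⟨A', hA'A.trans inter_subset_left, hA'm, hA'1, tendsto_order.2
      ⟨fun a ha => Eventually.of_forall fun t => ha.trans_le (hf t), fun b hb => ?_⟩⟩
    obtain ⟨n, hn⟩ := exists_nat_one_div_lt hb
    exact (hev n).mono fun t ht => ht.2.trans hn

lemma lowerSemicontinuous_measure_inter_setOf_norm_lt {ι Y E : Type*} [MeasurableSpace ι]
    [TopologicalSpace Y] [SeminormedAddCommGroup E] (μ : Measure ι) {g : ι → Y → E} {s : Set ι}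
    (hg : Equicontinuous (s.domRestrict g)) (ε : ℝ) :
    LowerSemicontinuous fun y => μ (s ∩ {i | ‖g i y‖ < ε}) := by
  intro y₀ m hm
  have hmono : Monotone fun k : ℕ => s ∩ {i | ‖g i y₀‖ < ε - 1 / (k + 1)} := fun k l hkl =>
    inter_subset_inter_right s fun i hi =>
      lt_of_lt_of_le hi (sub_le_sub_left (Nat.one_div_le_one_div hkl) ε)
  have hunion : ⋃ k : ℕ, s ∩ {i | ‖g i y₀‖ < ε - 1 / (k + 1)} = s ∩ {i | ‖g i y₀‖ < ε} := by
    rw [← inter_iUnion]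
    congr 1
    ext i
    simp only [mem_iUnion, mem_ofPred_eq]
    refine ⟨fun ⟨k, hk⟩ => hk.trans (sub_lt_self ε Nat.one_div_pos_of_nat), fun hi => ?_⟩
    obtain ⟨k, hk⟩ := exists_nat_one_div_lt (sub_pos.2 hi)
    exact ⟨k, by linarith⟩
  have hm' : m < μ (⋃ k : ℕ, s ∩ {i | ‖g i y₀‖ < ε - 1 / (k + 1)}) := by rwa [hunion]
  obtain ⟨k, hk⟩ := ((tendsto_measure_iUnion_atTop hmono).eventually (lt_mem_nhds hm')).exists
  filter_upwards [Metric.equicontinuousAt_iff_right.1 (hg y₀) _ (Nat.one_div_pos_of_nat (n := k))]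
    with y hy
  refine hk.trans_le (measure_mono fun i ⟨his, hi⟩ => ⟨his, ?_⟩)
  have hdist : dist (g i y₀) (g i y) < 1 / (k + 1) := hy ⟨i, his⟩
  have hnorm := norm_sub_norm_le (g i y) (g i y₀)
  rw [← dist_eq_norm, dist_comm] at hnorm
  simp only [mem_ofPred_eq] at hi ⊢
  linarith

namespace CZeroSemigroup

lemma measurableSet_inter_setOf_norm_lt (S : CZeroSemigroup α 𝕜 X) {B : Set ℂ}
    (hB : MeasurableSet B) (hBs : B ⊆ sector α) (x : X) (ε : ℝ) :
    MeasurableSet (B ∩ {t | ‖S.T t x‖ < ε}) := by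
  obtain ⟨u, hu, hequ⟩ := continuousOn_iff'.1 (S.cont' x).norm (Iio ε) isOpen_Iio
  convert hB.inter hu.measurableSet using 1
  ext t
  have ht := Set.ext_iff.1 hequ t
  exact ⟨fun ⟨htB, htε⟩ => ⟨htB, (ht.1 ⟨htε, hBs htB⟩).1⟩,
    fun ⟨htB, htu⟩ => ⟨htB, (ht.2 ⟨htu, hBs htB⟩).1⟩⟩

lemma equicontinuous_domRestrict [CompleteSpace X] (S : CZeroSemigroup α 𝕜 X) {s : Set ℂ}
    (hs : Bornology.IsBounded s) (hss : s ⊆ sector α) :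
    Equicontinuous (s.domRestrict fun t => ⇑(S.T t)) := by
  have hK : IsCompact (sector α ∩ closure s) :=
    hs.isCompact_closure.inter_left (isClosed_sector α)
  have hbdd (x : X) : ∃ C, ∀ t : s, ‖S.T t x‖ ≤ C := by
    obtain ⟨C, hC⟩ := hK.exists_bound_of_continuousOn ((S.cont' x).mono inter_subset_left)
    exact ⟨C, fun t => hC t ⟨hss t.2, subset_closure t.2⟩⟩
  exact ((NormedSpace.equicontinuous_TFAE fun t : s => S.T t).out 5 1).1 (banach_steinhaus hbdd)

lemma isOpen_setOf_lt_densRatio [CompleteSpace X] (S : CZeroSemigroup α 𝕜 X) (A : Set ℂ)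
    (ε r : ℝ) {c : ℝ} (hc : 0 ≤ c) :
    IsOpen {x | c < densRatio α (A ∩ {t | ‖S.T t x‖ < ε}) r} := by
  rcases (measureReal_nonneg (μ := volume) (s := sectorBall α r)).eq_or_lt with hv | hv
  · simp only [densRatio, ← hv, div_zero]
    exact isOpen_const
  have hbdd : Bornology.IsBounded (A ∩ sectorBall α r) :=
    Metric.isBounded_ball.subset (inter_subset_right.trans (sectorBall_subset_ball α r))
  have hlsc := lowerSemicontinuous_measure_inter_setOf_norm_lt volume
    (S.equicontinuous_domRestrict hbdd (inter_subset_right.trans (sep_subset _ _))) ε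
  convert hlsc.isOpen_preimage (ENNReal.ofReal (c * volume.real (sectorBall α r))) using 1
  ext x
  rw [mem_ofPred_eq, densRatio, lt_div_iff₀ hv, inter_right_comm, mem_preimage, mem_Ioi,
    ENNReal.ofReal_lt_iff_lt_toReal (by positivity)
      (measure_ne_top_of_subset (inter_subset_left.trans inter_subset_right)
        (volume_sectorBall_ne_top α r))]
  rfl

end CZeroSemigroup

lemma isGδ_setOf_udens_eq_one {Y : Type*} [TopologicalSpace Y] (F : Y → Set ℂ)
    (hF : ∀ r, ∀ c ≥ 0, IsOpen {y | c < densRatio α (F y) r}) :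
    IsGδ {y | udens α (F y) = 1} := by
  have hset : {y | udens α (F y) = 1} =
      ⋂ n : ℕ, ⋂ N : ℕ, ⋃ r ≥ (N : ℝ), {y | 1 - 1 / (n + 1) < densRatio α (F y) r} := by
    ext y
    simp only [mem_ofPred_eq, mem_iInter, mem_iUnion, udens_eq_one_iff_forall_nat, exists_prop]
  rw [hset]
  exact .iInter fun n => .iInter fun N => (isOpen_biUnion fun r _ => hF r _
    (sub_nonneg.2 (div_le_one_of_le₀ (by simp) (by positivity)))).isGδ

theorem stmt_15_general (α : ℝ) (hα : 0 < α)
    {𝕜 X : Type*} [NontriviallyNormedField 𝕜] [NormedAddCommGroup X] [NormedSpace 𝕜 X]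
    [CompleteSpace X] (S : CZeroSemigroup α 𝕜 X)
    (hdense : Dense {y : X | ∀ ε > (0:ℝ),
      ldens α {t ∈ sector α | ‖S.T t y‖ < ε} = 1 ∧
      udens α {t ∈ sector α | ‖S.T t y‖ < ε} = 1})
    (A : Set ℂ) (hA : A ⊆ sector α) (hAm : MeasurableSet A) (hA1 : udens α A = 1) :
    IsGδ {x : X | ∃ A' ⊆ A, MeasurableSet A' ∧ udens α A' = 1 ∧
        Tendsto (fun t => ‖S.T t x‖) (alongAbs A') (nhds 0)} ∧
    Dense {x : X | ∃ A' ⊆ A, MeasurableSet A' ∧ udens α A' = 1 ∧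
        Tendsto (fun t => ‖S.T t x‖) (alongAbs A') (nhds 0)} := by
  have hP : {x : X | ∃ A' ⊆ A, MeasurableSet A' ∧ udens α A' = 1 ∧
      Tendsto (fun t => ‖S.T t x‖) (alongAbs A') (nhds 0)} =
      ⋂ n : ℕ, {x | udens α (A ∩ {t | ‖S.T t x‖ < 1 / (n + 1)}) = 1} := by
    ext x
    simpa only [mem_iInter, mem_ofPred_eq] using exists_udens_eq_one_tendsto_zero_iff hα
      (fun _ => norm_nonneg _) (S.measurableSet_inter_setOf_norm_lt hAm hA x)
  rw [hP]
  refine ⟨.iInter fun n => isGδ_setOf_udens_eq_one _ fun r c hc =>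
    S.isOpen_setOf_lt_densRatio A _ r hc, hdense.mono fun y hy => mem_iInter.2 fun n => ?_⟩
  have hsector : udens α (A ∩ {t ∈ sector α | ‖S.T t y‖ < 1 / (n + 1)}) = 1 :=
    udens_inter_eq_one hA1
      (S.measurableSet_inter_setOf_norm_lt (isClosed_sector α).measurableSet subset_rfl y _)
      (hy _ Nat.one_div_pos_of_nat).1
  exact udens_eq_one_of_subset (inter_subset_inter_right A fun _ ht => ht.2) hsector

/-- If the distributionally asymptotic cell of `0` is dense, then for every measurable set
`A ⊆ Δ` of full upper density, the set `P(A)` is a dense `Gδ` subset of `X`. -/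
theorem stmt_15 (α : ℝ) (hα : 0 < α) (hα' : α < Real.pi / 2)
    {𝕜 X : Type*} [NontriviallyNormedField 𝕜] [NormedAddCommGroup X] [NormedSpace 𝕜 X]
    [CompleteSpace X] (S : CZeroSemigroup α 𝕜 X)
    (hdense : Dense {y : X | ∀ ε > (0:ℝ),
      ldens α {t ∈ sector α | ‖S.T t y‖ < ε} = 1 ∧
      udens α {t ∈ sector α | ‖S.T t y‖ < ε} = 1})
    (A : Set ℂ) (hA : A ⊆ sector α) (hAm : MeasurableSet A) (hA1 : udens α A = 1) :
    IsGδ {x : X | ∃ A' ⊆ A, MeasurableSet A' ∧ udens α A' = 1 ∧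
        Tendsto (fun t => ‖S.T t x‖) (alongAbs A') (nhds 0)} ∧
    Dense {x : X | ∃ A' ⊆ A, MeasurableSet A' ∧ udens α A' = 1 ∧
        Tendsto (fun t => ‖S.T t x‖) (alongAbs A') (nhds 0)} :=
  stmt_15_general α hα S hdense A hA hAm hA1
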